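/- (Claim B.2 content.) Let 0 < γ ≤ 1 and let μ1, μ2 be probability distributions on the four action profiles {A,B}×{C,D}. If μ1({(A,D)}) > γ/8, then (1/2)·E_{μ1}[U2 in G1] + (1/2)·E_{μ2}[U2 in G2] < 0. Moreover, for any probability distributions ν1, ν2 on {A,B}×{C,D} whose second-coordinate marginal is the point mass on C (i.e., the column player always plays C), (1/2)·E_{ν1}[U2 in G1] + (1/2)·E_{ν2}[U2 in G2] ≥ 0; hence the always-C payoff strictly exceeds any payoff attainable with μ1({(A,D)}) > γ/8. -/
import Mathlib


/-!
Statement 10 (Claim B.2 content): if the correlated strategy profile `μ1` for game `G1`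
puts mass more than `γ/8` on `(A,D)`, then player 2's average expected utility across
the uniform mixture of `G1` and `G2` is negative; whereas always playing `C` guarantees
at least `0`, strictly more.  (Player 2's utility function is identical in `G1` and `G2`.)

Row actions: `0 = A`, `1 = B`.  Column actions: `0 = C`, `1 = D`.
-/

/-- A probability distribution on a finite set. -/
def IsDist {S : Type*} [Fintype S] (μ : S → ℝ) : Prop :=
  (∀ s, 0 ≤ μ s) ∧ ∑ s, μ s = 1

/-- Player 2's utilities in game `G1`. -/
noncomputable def U2G1 (γ : ℝ) : Fin 2 → Fin 2 → ℝ := ![![1, -32 / γ], ![0, 2]]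

/-- Player 2's utilities in game `G2`. -/
noncomputable def U2G2 (γ : ℝ) : Fin 2 → Fin 2 → ℝ := ![![1, -32 / γ], ![0, 2]]

/-- Expected utility of the payoff matrix `U` under the correlated strategy profile `μ`. -/
noncomputable def expU (μ : Fin 2 × Fin 2 → ℝ) (U : Fin 2 → Fin 2 → ℝ) : ℝ :=
  ∑ p, μ p * U p.1 p.2


lemma expU_eval (μ : Fin 2 × Fin 2 → ℝ) (γ : ℝ) :
    expU μ (U2G1 γ) = μ (0,0) * 1 + μ (0,1) * (-32 / γ) + μ (1,0) * 0 + μ (1,1) * 2 := by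
  simp [expU, U2G1, Fintype.sum_prod_type, Fin.sum_univ_two]

lemma expU_eval' (μ : Fin 2 × Fin 2 → ℝ) (γ : ℝ) :
    expU μ (U2G2 γ) = μ (0,0) * 1 + μ (0,1) * (-32 / γ) + μ (1,0) * 0 + μ (1,1) * 2 := by
  simp [expU, U2G2, Fintype.sum_prod_type, Fin.sum_univ_two]

lemma sum_eval (μ : Fin 2 × Fin 2 → ℝ) :
    ∑ s, μ s = μ (0,0) + μ (0,1) + μ (1,0) + μ (1,1) := by
  simp [Fintype.sum_prod_type, Fin.sum_univ_two]
  ring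

lemma neg_part (γ : ℝ) (hγ0 : 0 < γ) (μ : Fin 2 × Fin 2 → ℝ) (hμ : IsDist μ)
    (hAD : μ (0, 1) > γ / 8) : expU μ (U2G1 γ) < -2 := by
  obtain ⟨hpos, hsum⟩ := hμ
  rw [sum_eval] at hsum
  rw [expU_eval]
  have h00 := hpos (0,0); have h10 := hpos (1,0); have h11 := hpos (1,1)
  have key : μ (0,1) * (32 / γ) > 4 := by
    have : (γ/8) * (32/γ) = 4 := by field_simp; ring
    calc μ (0,1) * (32/γ) > (γ/8) * (32/γ) := by
          apply mul_lt_mul_of_pos_right hAD; positivity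
      _ = 4 := this
  have e : μ (0,1) * (-32 / γ) = -(μ (0,1) * (32 / γ)) := by ring
  linarith

lemma bound_part (γ : ℝ) (hγ0 : 0 < γ) (μ : Fin 2 × Fin 2 → ℝ) (hμ : IsDist μ) :
    expU μ (U2G2 γ) ≤ 2 := by
  obtain ⟨hpos, hsum⟩ := hμ
  rw [sum_eval] at hsum
  rw [expU_eval']
  have h00 := hpos (0,0); have h01 := hpos (0,1); have h10 := hpos (1,0); have h11 := hpos (1,1)
  have e : -32/γ = -(32/γ) := by ring
  have hg : (0:ℝ) < 32/γ := by positivity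
  have : μ (0,1) * (-32/γ) ≤ 0 := by
    rw [e]
    apply mul_nonpos_of_nonneg_of_nonpos h01
    linarith
  linarith

lemma nu_part (γ : ℝ) (ν : Fin 2 × Fin 2 → ℝ) (hν : IsDist ν)
    (hC : (∑ a, ν (a, 0)) = 1) : expU ν (U2G1 γ) ≥ 0 := by
  obtain ⟨hpos, hsum⟩ := hν
  rw [sum_eval] at hsum
  rw [Fin.sum_univ_two] at hC
  have h01 := hpos (0,1); have h11 := hpos (1,1); have h00 := hpos (0,0)
  have e01 : ν (0,1) = 0 := by linarith
  have e11 : ν (1,1) = 0 := by linarith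
  rw [expU_eval, e01, e11]; linarith

lemma nu_part' (γ : ℝ) (ν : Fin 2 × Fin 2 → ℝ) (hν : IsDist ν)
    (hC : (∑ a, ν (a, 0)) = 1) : expU ν (U2G2 γ) ≥ 0 := by
  obtain ⟨hpos, hsum⟩ := hν
  rw [sum_eval] at hsum
  rw [Fin.sum_univ_two] at hC
  have h01 := hpos (0,1); have h11 := hpos (1,1); have h00 := hpos (0,0)
  have e01 : ν (0,1) = 0 := by linarith
  have e11 : ν (1,1) = 0 := by linarith
  rw [expU_eval', e01, e11]; linarith

theorem claim_B2 (γ : ℝ) (hγ0 : 0 < γ) (hγ1 : γ ≤ 1)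
    (μ1 μ2 : Fin 2 × Fin 2 → ℝ) (hμ1 : IsDist μ1) (hμ2 : IsDist μ2)
    (hAD : μ1 (0, 1) > γ / 8) :
    (1 / 2) * expU μ1 (U2G1 γ) + (1 / 2) * expU μ2 (U2G2 γ) < 0 ∧
    ∀ ν1 ν2 : Fin 2 × Fin 2 → ℝ, IsDist ν1 → IsDist ν2 →
      (∑ a, ν1 (a, 0)) = 1 → (∑ a, ν2 (a, 0)) = 1 →
      (1 / 2) * expU ν1 (U2G1 γ) + (1 / 2) * expU ν2 (U2G2 γ) ≥ 0 ∧
      (1 / 2) * expU ν1 (U2G1 γ) + (1 / 2) * expU ν2 (U2G2 γ) >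
        (1 / 2) * expU μ1 (U2G1 γ) + (1 / 2) * expU μ2 (U2G2 γ) := by
  
  have h1 := neg_part γ hγ0 μ1 hμ1 hAD
  have h2 := bound_part γ hγ0 μ2 hμ2
  have hneg : (1 / 2) * expU μ1 (U2G1 γ) + (1 / 2) * expU μ2 (U2G2 γ) < 0 := by linarith
  refine ⟨hneg, fun ν1 ν2 hν1 hν2 hC1 hC2 => ?_⟩
  have g1 := nu_part γ ν1 hν1 hC1
  have g2 := nu_part' γ ν2 hν2 hC2
  constructor <;> linarith
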